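/- (Uniform H^1 bound) Let V_k ∈ L^1(ℝ) ∩ L^∞(ℝ) for k = 1,…,N, with distinct points y_k ∈ ℝ and exponents μ_k > 0, and assume for each k either V_k ≥ 0 or μ_k < 1. Let ψ^ε(t) be the global H^1 solution of i∂_t ψ^ε = −Δψ^ε + ∑_k ε^{-1} V_k((x−y_k)/ε) |ψ^ε|^{2μ_k} ψ^ε with initial datum ψ₀ ∈ H^1(ℝ). Then there is a constant c, independent of ε ∈ (0,1] and t ∈ ℝ, such that ‖ψ^ε(t)‖_{H^1} ≤ c. -/

import Mathlib

/-!
Energy conservation gives ‖ψ'‖² = E(ψ₀) − ∑ₖ (μₖ+1)⁻¹ Pₖ(ψ), where Pₖ is the potential energy of the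
rescaled potential ε⁻¹Vₖ((x−yₖ)/ε), whose L¹ norm is ‖Vₖ‖₁ for every ε. A local
Gagliardo–Nirenberg bound ‖ψ‖∞ ≤ (‖ψ‖ + 1)(1 + ‖ψ'‖)^{1/2} then gives
|Pₖ(ψ)| ≤ ‖Vₖ‖₁ (‖ψ‖ + 1)^{2μₖ+2} (1 + ‖ψ'‖)^{μₖ+1}, uniformly in ε. Terms with Vₖ ≥ 0 have
the good sign; for μₖ < 1 the exponent μₖ + 1 is below 2, so Young's inequality absorbs the
term into a small multiple of ‖ψ'‖². With mass conservation this bounds ‖ψ'‖ uniformly.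
-/

open MeasureTheory

noncomputable def L2norm (f : ℝ → ℂ) : ℝ := (eLpNorm f 2 volume).toReal

noncomputable def H1norm (f g : ℝ → ℂ) : ℝ := Real.sqrt (L2norm f ^ 2 + L2norm g ^ 2)

/-- `f` is (the continuous representative of) an `H¹(ℝ)` function with weak
derivative `g`: both are in `L²` and `f` is the integral of `g`. -/
def IsH1 (f g : ℝ → ℂ) : Prop :=
  MemLp f 2 volume ∧ MemLp g 2 volume ∧ ∀ x y : ℝ, f y - f x = ∫ t in x..y, g t

/-- The free Schrödinger kernel `U(t,x) = (4πit)^{-1/2} e^{ix²/(4t)}`. -/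
noncomputable def freeK (t x : ℝ) : ℂ :=
  (4 * Real.pi * Complex.I * t) ^ (-(1/2 : ℂ)) * Complex.exp (Complex.I * x ^ 2 / (4 * t))

/-- ψ is an H¹ (Duhamel/integral) solution of the rescaled NLS
i∂ₜψ = −Δψ + ∑ₖ ε⁻¹ Vₖ((x−yₖ)/ε)|ψ|^{2μₖ}ψ with datum ψ0. -/
def RescaledSol (N : ℕ) (V : Fin N → ℝ → ℝ) (y : Fin N → ℝ) (μ : Fin N → ℝ)
    (ε : ℝ) (ψ0 : ℝ → ℂ) (ψ : ℝ → ℝ → ℂ) : Prop :=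
  ψ 0 = ψ0 ∧ ∀ t : ℝ, 0 < t → ∀ x : ℝ,
    ψ t x = (∫ z, freeK t (x - z) * ψ0 z)
      - Complex.I * ∑ k, ∫ s in (0 : ℝ)..t, ∫ z,
          freeK (t - s) (x - z) *
            Complex.ofReal (ε⁻¹ * V k ((z - y k) / ε) * ‖ψ s z‖ ^ (2 * μ k)) * ψ s z

/-- ψ is an H¹ (Duhamel/integral) solution of the NLS with pointlike
nonlinearities of strengths αₖ at the points yₖ. -/
def LimitSol (N : ℕ) (α : Fin N → ℝ) (y : Fin N → ℝ) (μ : Fin N → ℝ)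
    (ψ0 : ℝ → ℂ) (ψ : ℝ → ℝ → ℂ) : Prop :=
  ψ 0 = ψ0 ∧ ∀ t : ℝ, 0 < t → ∀ x : ℝ,
    ψ t x = (∫ z, freeK t (x - z) * ψ0 z)
      - Complex.I * ∑ k, (α k : ℂ) * ∫ s in (0 : ℝ)..t,
          freeK (t - s) (x - y k) * Complex.ofReal (‖ψ s (y k)‖ ^ (2 * μ k)) * ψ s (y k)

/-- The conserved energy of the rescaled problem. -/
noncomputable def Eres (N : ℕ) (V : Fin N → ℝ → ℝ) (y : Fin N → ℝ) (μ : Fin N → ℝ)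
    (ε : ℝ) (ψ dψ : ℝ → ℂ) : ℝ :=
  (∫ x, ‖dψ x‖ ^ 2) +
    ∑ k, (μ k + 1)⁻¹ * ∫ x, ε⁻¹ * V k ((x - y k) / ε) * ‖ψ x‖ ^ (2 * μ k + 2)

open Set

lemma L2norm_nonneg (f : ℝ → ℂ) : 0 ≤ L2norm f := ENNReal.toReal_nonneg

lemma integral_norm_sq_eq_L2norm_sq {f : ℝ → ℂ} (hf : MemLp f 2 volume) :
    ∫ x, ‖f x‖ ^ 2 = L2norm f ^ 2 := by
  have h := hf.eLpNorm_eq_integral_rpow_norm two_ne_zero ENNReal.ofNat_ne_top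
  have hI : 0 ≤ ∫ x, ‖f x‖ ^ 2 := integral_nonneg fun x => by positivity
  simp only [ENNReal.toReal_ofNat, Real.rpow_two] at h
  rw [L2norm, h, ENNReal.toReal_ofReal (by positivity), ← Real.rpow_natCast,
    ← Real.rpow_mul hI]
  norm_num

lemma setIntegral_norm_sq_le_L2norm_sq {f : ℝ → ℂ} (hf : MemLp f 2 volume) (s : Set ℝ) :
    ∫ x in s, ‖f x‖ ^ 2 ≤ L2norm f ^ 2 :=
  integral_norm_sq_eq_L2norm_sq hf ▸ setIntegral_le_integral
    (hf.integrable_norm_pow two_ne_zero) (ae_of_all _ fun _ => by positivity)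

lemma exists_mem_Ioc_norm_le {f : ℝ → ℂ} (hf : MemLp f 2 volume) {L : ℝ} (hL : 0 < L)
    (x : ℝ) : ∃ a ∈ Ioc (x - L) x, ‖f a‖ ≤ √L⁻¹ * L2norm f := by
  have hvol : volume (Ioc (x - L) x) = ENNReal.ofReal L := by simp
  obtain ⟨a, ha, hle⟩ := exists_le_setAverage (μ := volume) (s := Ioc (x - L) x)
    (by simp [hL]) (by simp) (hf.integrable_norm_pow two_ne_zero).integrableOn
  refine ⟨a, ha, (Real.le_sqrt_of_sq_le (y := L⁻¹ * L2norm f ^ 2) ?_).trans_eq ?_⟩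
  · rw [setAverage_eq, measureReal_def, hvol, ENNReal.toReal_ofReal hL.le, smul_eq_mul] at hle
    exact hle.trans
      (mul_le_mul_of_nonneg_left (setIntegral_norm_sq_le_L2norm_sq hf _) (by positivity))
  · rw [Real.sqrt_mul (by positivity), Real.sqrt_sq (L2norm_nonneg f)]

lemma norm_intervalIntegral_le {g : ℝ → ℂ} (hg : MemLp g 2 volume) {a b : ℝ} (hab : a ≤ b)
    {c : ℝ} (hc : 0 < c) : ‖∫ t in a..b, g t‖ ≤ (c * L2norm g ^ 2 + (b - a) / c) / 2 := by
  have hg2 : Integrable (fun t => ‖g t‖ ^ 2) := hg.integrable_norm_pow two_ne_zero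
  calc ‖∫ t in a..b, g t‖ ≤ ∫ t in a..b, (c * ‖g t‖ ^ 2 + c⁻¹) / 2 := by
        refine intervalIntegral.norm_integral_le_of_norm_le hab
          (ae_of_all _ fun t _ => ?_) ?_
        · have : 0 ≤ (c * ‖g t‖ - 1) ^ 2 / c := by positivity
          field_simp at this ⊢
          nlinarith
        · exact ((hg2.const_mul c).intervalIntegrable.add intervalIntegrable_const).div_const 2
    _ = (c * (∫ t in a..b, ‖g t‖ ^ 2) + (b - a) / c) / 2 := by
        rw [intervalIntegral.integral_div, intervalIntegral.integral_add
          (hg2.const_mul c).intervalIntegrable intervalIntegrable_const,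
          intervalIntegral.integral_const_mul, intervalIntegral.integral_const, smul_eq_mul,
          div_eq_mul_inv (b - a)]
    _ ≤ (c * L2norm g ^ 2 + (b - a) / c) / 2 := by
        rw [intervalIntegral.integral_of_le hab]
        gcongr
        exact setIntegral_norm_sq_le_L2norm_sq hg _

/-- A local Gagliardo–Nirenberg inequality: `f x` is compared with its value at a point of
`[x - L, x]` where `‖f‖²` is at most its mean, so no decay of `f` at infinity is needed. -/
lemma IsH1.norm_le {f g : ℝ → ℂ} (h : IsH1 f g) {L c : ℝ} (hL : 0 < L) (hc : 0 < c) (x : ℝ) :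
    ‖f x‖ ≤ √L⁻¹ * L2norm f + (c * L2norm g ^ 2 + L / c) / 2 := by
  obtain ⟨a, ⟨haL, hax⟩, hfa⟩ := exists_mem_Ioc_norm_le h.1 hL x
  have hfxa : ‖f x - f a‖ ≤ (c * L2norm g ^ 2 + L / c) / 2 := by
    rw [h.2.2 a x]
    refine (norm_intervalIntegral_le h.2.1 hax hc).trans ?_
    gcongr
    linarith
  linarith [norm_le_norm_add_norm_sub' (f x) (f a)]

lemma IsH1.norm_le_mul_sqrt {f g : ℝ → ℂ} (h : IsH1 f g) (x : ℝ) :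
    ‖f x‖ ≤ (L2norm f + 1) * √(1 + L2norm g) := by
  set D := L2norm g
  set s := √(1 + D)
  have hD : 0 ≤ D := L2norm_nonneg g
  have hs : 0 < s := Real.sqrt_pos.2 (by linarith)
  have hs2 : s ^ 2 = 1 + D := Real.sq_sqrt (by linarith)
  have key := h.norm_le (L := (1 + D)⁻¹) (c := (s ^ 3)⁻¹) (by positivity) (by positivity) x
  rw [inv_inv, ← hs2, Real.sqrt_sq hs.le] at key
  have hkin : (s ^ 3)⁻¹ * D ^ 2 ≤ s := by
    rw [inv_mul_le_iff₀ (by positivity)]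
    nlinarith
  have hpot : (s ^ 2)⁻¹ / (s ^ 3)⁻¹ = s := by field_simp
  linarith

noncomputable def scaledPotentialEnergy (W : ℝ → ℝ) (a m ε : ℝ) (f : ℝ → ℂ) : ℝ :=
  ∫ x, ε⁻¹ * W ((x - a) / ε) * ‖f x‖ ^ m

lemma integral_inv_mul_comp_sub_div (W : ℝ → ℝ) {ε : ℝ} (hε : 0 < ε) (a : ℝ) :
    ∫ x, ε⁻¹ * W ((x - a) / ε) = ∫ x, W x := by
  rw [integral_const_mul, integral_sub_right_eq_self (fun x => W (x / ε)) a,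
    Measure.integral_comp_div W ε, abs_of_pos hε, smul_eq_mul, inv_mul_cancel_left₀ hε.ne']

lemma abs_scaledPotentialEnergy_le_of_norm_le {W : ℝ → ℝ} (hW : Integrable W) {ε : ℝ}
    (hε : 0 < ε) (a : ℝ) {m : ℝ} (hm : 0 ≤ m) {f : ℝ → ℂ} {S : ℝ} (hfS : ∀ x, ‖f x‖ ≤ S) :
    |scaledPotentialEnergy W a m ε f| ≤ (∫ x, |W x|) * S ^ m := by
  have hmaj : Integrable (fun x => ε⁻¹ * |W ((x - a) / ε)| * S ^ m) :=
    (((hW.abs.comp_div (g := fun x => |W x|) hε.ne').comp_sub_right a).const_mul ε⁻¹).mul_const _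
  calc |scaledPotentialEnergy W a m ε f| ≤ ∫ x, ε⁻¹ * |W ((x - a) / ε)| * S ^ m := by
        rw [← Real.norm_eq_abs, scaledPotentialEnergy]
        refine norm_integral_le_of_norm_le hmaj (ae_of_all _ fun x => ?_)
        rw [Real.norm_eq_abs, abs_mul, abs_mul, abs_of_pos (inv_pos.2 hε),
          abs_of_nonneg (Real.rpow_nonneg (norm_nonneg _) m)]
        gcongr
        exact hfS x
    _ = (∫ x, |W x|) * S ^ m := by
        rw [integral_mul_const, integral_inv_mul_comp_sub_div (fun u => |W u|) hε]

lemma abs_scaledPotentialEnergy_le {W : ℝ → ℝ} (hW : Integrable W) {ε : ℝ} (hε : 0 < ε)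
    (a : ℝ) {m : ℝ} (hm : 0 ≤ m) {f g : ℝ → ℂ} (h : IsH1 f g) :
    |scaledPotentialEnergy W a m ε f|
      ≤ (∫ x, |W x|) * ((L2norm f + 1) ^ m * (1 + L2norm g) ^ (m / 2)) := by
  have hD : 0 ≤ 1 + L2norm g := by linarith [L2norm_nonneg g]
  refine (abs_scaledPotentialEnergy_le_of_norm_le hW hε a hm h.norm_le_mul_sqrt).trans_eq ?_
  rw [Real.mul_rpow (by linarith [L2norm_nonneg f]) (Real.sqrt_nonneg _), Real.sqrt_eq_rpow,
    ← Real.rpow_mul hD, one_div_mul_eq_div]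

lemma scaledPotentialEnergy_nonneg {W : ℝ → ℝ} (hW : ∀ x, 0 ≤ W x) (a m : ℝ) {ε : ℝ}
    (hε : 0 ≤ ε) (f : ℝ → ℂ) : 0 ≤ scaledPotentialEnergy W a m ε f :=
  integral_nonneg fun x => by have := hW ((x - a) / ε); positivity

lemma rpow_le_mul_sq_add {x p δ : ℝ} (hx : 0 ≤ x) (hp : 0 ≤ p) (hp2 : p < 2) (hδ : 0 < δ) :
    x ^ p ≤ δ * x ^ 2 + δ⁻¹ ^ (p / (2 - p)) := by
  rcases le_or_gt δ⁻¹ (x ^ (2 - p)) with hlarge | hsmall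
  · have hsplit : x ^ p * x ^ (2 - p) = x ^ 2 := by
      rw [← Real.rpow_add' hx (by norm_num), add_sub_cancel, Real.rpow_two]
    have : x ^ p * δ⁻¹ ≤ x ^ 2 := hsplit ▸ mul_le_mul_of_nonneg_left hlarge (by positivity)
    have : x ^ p ≤ δ * x ^ 2 := by
      rwa [← div_eq_mul_inv, div_le_iff₀ hδ, mul_comm] at this
    linarith [Real.rpow_nonneg (inv_nonneg.2 hδ.le) (p / (2 - p))]
  · have : x ^ p = (x ^ (2 - p)) ^ (p / (2 - p)) := by
      rw [← Real.rpow_mul hx, mul_div_cancel₀ _ (by linarith)]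
    have : x ^ p ≤ δ⁻¹ ^ (p / (2 - p)) :=
      this ▸ Real.rpow_le_rpow (by positivity) hsmall.le (div_nonneg hp (by linarith))
    nlinarith [sq_nonneg x]

lemma exists_mul_rpow_le_mul_sq_add (B : ℝ) {p η : ℝ} (hp : 0 ≤ p) (hp2 : p < 2) (hη : 0 < η) :
    ∃ K, ∀ x, 0 ≤ x → B * x ^ p ≤ η * x ^ 2 + K := by
  set δ := η / (|B| + 1)
  have hδ : 0 < δ := by positivity
  have hBδ : |B| * δ ≤ η := by
    rw [mul_div_assoc', div_le_iff₀ (by positivity)]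
    nlinarith
  refine ⟨|B| * δ⁻¹ ^ (p / (2 - p)), fun x hx => ?_⟩
  have hxp : 0 ≤ x ^ p := Real.rpow_nonneg hx p
  calc B * x ^ p ≤ |B| * x ^ p := mul_le_mul_of_nonneg_right (le_abs_self B) hxp
    _ ≤ |B| * (δ * x ^ 2 + δ⁻¹ ^ (p / (2 - p))) :=
        mul_le_mul_of_nonneg_left (rpow_le_mul_sq_add hx hp hp2 hδ) (abs_nonneg B)
    _ ≤ η * x ^ 2 + |B| * δ⁻¹ ^ (p / (2 - p)) := by
        rw [mul_add, ← mul_assoc]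
        gcongr

lemma exists_neg_scaledPotentialEnergy_le {W : ℝ → ℝ} (hW : Integrable W) {μ : ℝ}
    (hμ : -1 ≤ μ) (hsign : (∀ x, 0 ≤ W x) ∨ μ < 1) (a M : ℝ) {η : ℝ} (hη : 0 < η) :
    ∃ K, ∀ ε > 0, ∀ f g, IsH1 f g → L2norm f ≤ M →
      -((μ + 1)⁻¹ * scaledPotentialEnergy W a (2 * μ + 2) ε f) ≤ η * L2norm g ^ 2 + K := by
  have hμ1 : 0 ≤ (μ + 1)⁻¹ := inv_nonneg.2 (by linarith)
  rcases hsign with hWnn | hμlt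
  · refine ⟨0, fun ε hε f g _ _ => ?_⟩
    have := mul_nonneg hμ1 (scaledPotentialEnergy_nonneg hWnn a (2 * μ + 2) hε.le f)
    have : 0 ≤ η * L2norm g ^ 2 := by positivity
    linarith
  · obtain ⟨K, hK⟩ := exists_mul_rpow_le_mul_sq_add
      ((μ + 1)⁻¹ * ((∫ x, |W x|) * (M + 1) ^ (2 * μ + 2))) (p := μ + 1)
      (by linarith) (by linarith) (half_pos hη)
    refine ⟨η + K, fun ε hε f g h hfM => ?_⟩
    set D := L2norm g
    have hD : 0 ≤ 1 + D := by linarith [L2norm_nonneg g]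
    have hP := abs_scaledPotentialEnergy_le hW hε a (m := 2 * μ + 2) (by linarith) h
    rw [show (2 * μ + 2) / 2 = μ + 1 by ring] at hP
    have hmass : (L2norm f + 1) ^ (2 * μ + 2) ≤ (M + 1) ^ (2 * μ + 2) :=
      Real.rpow_le_rpow (by linarith [L2norm_nonneg f]) (by linarith) (by linarith)
    calc -((μ + 1)⁻¹ * scaledPotentialEnergy W a (2 * μ + 2) ε f)
        ≤ (μ + 1)⁻¹ * |scaledPotentialEnergy W a (2 * μ + 2) ε f| := by
          rw [← mul_neg]
          exact mul_le_mul_of_nonneg_left (neg_le_abs _) hμ1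
      _ ≤ (μ + 1)⁻¹ * ((∫ x, |W x|) * (M + 1) ^ (2 * μ + 2)) * (1 + D) ^ (μ + 1) := by
          rw [mul_assoc, mul_assoc]
          gcongr
          refine hP.trans ?_
          have : 0 ≤ ∫ x, |W x| := integral_nonneg fun x => abs_nonneg _
          gcongr
      _ ≤ η / 2 * (1 + D) ^ 2 + K := hK _ hD
      _ ≤ η * D ^ 2 + (η + K) := by nlinarith [sq_nonneg (1 - D)]

lemma Eres_eq (N : ℕ) (V : Fin N → ℝ → ℝ) (y μ : Fin N → ℝ) (ε : ℝ) (f g : ℝ → ℂ) :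
    Eres N V y μ ε f g = (∫ x, ‖g x‖ ^ 2) +
      ∑ k, (μ k + 1)⁻¹ * scaledPotentialEnergy (V k) (y k) (2 * μ k + 2) ε f :=
  rfl

lemma exists_Eres_le {N : ℕ} {V : Fin N → ℝ → ℝ} (hV : ∀ k, Integrable (V k)) (y : Fin N → ℝ)
    {μ : Fin N → ℝ} (hμ : ∀ k, -1 ≤ μ k) {f g : ℝ → ℂ} (h : IsH1 f g) :
    ∃ A, ∀ ε > 0, Eres N V y μ ε f g ≤ A := by
  refine ⟨L2norm g ^ 2 + ∑ k, (μ k + 1)⁻¹ * ((∫ x, |V k x|) *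
    ((L2norm f + 1) ^ (2 * μ k + 2) * (1 + L2norm g) ^ ((2 * μ k + 2) / 2))), fun ε hε => ?_⟩
  rw [Eres_eq, integral_norm_sq_eq_L2norm_sq h.2.1]
  gcongr with k
  · exact inv_nonneg.2 (by linarith [hμ k])
  · exact (le_abs_self _).trans
      (abs_scaledPotentialEnergy_le (hV k) hε (y k) (by linarith [hμ k]) h)

lemma exists_le_Eres {N : ℕ} {V : Fin N → ℝ → ℝ} (hV : ∀ k, Integrable (V k)) (y : Fin N → ℝ)
    {μ : Fin N → ℝ} (hμ : ∀ k, -1 ≤ μ k) (hsign : ∀ k, (∀ x, 0 ≤ V k x) ∨ μ k < 1) (M : ℝ) :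
    ∃ K, ∀ ε > 0, ∀ f g, IsH1 f g → L2norm f ≤ M →
      L2norm g ^ 2 / 2 - K ≤ Eres N V y μ ε f g := by
  set η : ℝ := (2 * (N + 1))⁻¹
  choose K hK using fun k =>
    exists_neg_scaledPotentialEnergy_le (hV k) (hμ k) (hsign k) (y k) M (η := η) (by positivity)
  refine ⟨∑ k, K k, fun ε hε f g h hfM => ?_⟩
  have hsum := Finset.sum_le_sum fun k (_ : k ∈ Finset.univ) => hK k ε hε f g h hfM
  rw [Finset.sum_neg_distrib, Finset.sum_add_distrib, Finset.sum_const, Finset.card_univ,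
    Fintype.card_fin, nsmul_eq_mul] at hsum
  have hNη : (N : ℝ) * η ≤ 1 / 2 := by
    rw [mul_inv_le_iff₀ (by positivity)]
    linarith
  have := mul_le_mul_of_nonneg_right hNη (sq_nonneg (L2norm g))
  rw [Eres_eq, integral_norm_sq_eq_L2norm_sq h.2.1]
  linarith

theorem uniform_H1_bound_general (N : ℕ) (V : Fin N → ℝ → ℝ) (y : Fin N → ℝ)
    (μ : Fin N → ℝ)
    (hV : ∀ k, Integrable (V k) ∧ ∃ C : ℝ, ∀ x, |V k x| ≤ C)
    (hμ : ∀ k, 0 < μ k)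
    (hsign : ∀ k, (∀ x, 0 ≤ V k x) ∨ μ k < 1)
    (ψ0 dψ0 : ℝ → ℂ) (hψ0 : IsH1 ψ0 dψ0)
    (ψ dψ : ℝ → ℝ → ℝ → ℂ)
    (hH1 : ∀ ε ∈ Set.Ioc (0 : ℝ) 1, ∀ t : ℝ, IsH1 (ψ ε t) (dψ ε t))
    (hmass : ∀ ε ∈ Set.Ioc (0 : ℝ) 1, ∀ t : ℝ, L2norm (ψ ε t) = L2norm ψ0)
    (henergy : ∀ ε ∈ Set.Ioc (0 : ℝ) 1, ∀ t : ℝ,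
      Eres N V y μ ε (ψ ε t) (dψ ε t) = Eres N V y μ ε ψ0 dψ0) :
    ∃ c : ℝ, ∀ ε ∈ Set.Ioc (0 : ℝ) 1, ∀ t : ℝ, H1norm (ψ ε t) (dψ ε t) ≤ c := by
  have hVint k := (hV k).1
  have hμ' k : -1 ≤ μ k := by linarith [hμ k]
  obtain ⟨A, hA⟩ := exists_Eres_le hVint y hμ' hψ0
  obtain ⟨K, hK⟩ := exists_le_Eres hVint y hμ' hsign (L2norm ψ0)
  refine ⟨√(L2norm ψ0 ^ 2 + 2 * (A + K)), fun ε hε t => ?_⟩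
  have hkin : L2norm (dψ ε t) ^ 2 / 2 - K ≤ A :=
    (hK ε hε.1 _ _ (hH1 ε hε t) (hmass ε hε t).le).trans
      ((henergy ε hε t).trans_le (hA ε hε.1))
  rw [H1norm, hmass ε hε t]
  exact Real.sqrt_le_sqrt (by linarith)

/-- Uniform H¹ a priori bound: the solutions ψ^ε of the rescaled NLS, conserving
mass and energy, are bounded in H¹ uniformly in ε ∈ (0,1] and t ∈ ℝ, provided
for each k either V_k ≥ 0 or μ_k < 1. -/
theorem uniform_H1_bound (N : ℕ) (hN : 1 ≤ N) (V : Fin N → ℝ → ℝ) (y : Fin N → ℝ)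
    (μ : Fin N → ℝ)
    (hV : ∀ k, Integrable (V k) ∧ ∃ C : ℝ, ∀ x, |V k x| ≤ C)
    (hy : Function.Injective y) (hμ : ∀ k, 0 < μ k)
    (hsign : ∀ k, (∀ x, 0 ≤ V k x) ∨ μ k < 1)
    (ψ0 dψ0 : ℝ → ℂ) (hψ0 : IsH1 ψ0 dψ0)
    (ψ dψ : ℝ → ℝ → ℝ → ℂ)
    (hsol : ∀ ε ∈ Set.Ioc (0 : ℝ) 1, RescaledSol N V y μ ε ψ0 (ψ ε))
    (hH1 : ∀ ε ∈ Set.Ioc (0 : ℝ) 1, ∀ t : ℝ, IsH1 (ψ ε t) (dψ ε t))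
    (hmass : ∀ ε ∈ Set.Ioc (0 : ℝ) 1, ∀ t : ℝ, L2norm (ψ ε t) = L2norm ψ0)
    (henergy : ∀ ε ∈ Set.Ioc (0 : ℝ) 1, ∀ t : ℝ,
      Eres N V y μ ε (ψ ε t) (dψ ε t) = Eres N V y μ ε ψ0 dψ0) :
    ∃ c : ℝ, ∀ ε ∈ Set.Ioc (0 : ℝ) 1, ∀ t : ℝ, H1norm (ψ ε t) (dψ ε t) ≤ c :=
  uniform_H1_bound_general N V y μ hV hμ hsign ψ0 dψ0 hψ0 ψ dψ hH1 hmass henergy
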